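/- arXiv:2605.00201 — 7 statements merged into one kernel-verified Lean document; each statement's English description precedes it below -/
import Mathlib

section
/- Let M be a matroid on n elements that can be partitioned into k independent sets, and let M' be the truncation of M to rank r = ⌈n/k⌉. Then the ground set of M' can also be partitioned into k sets each independent in M'. -/
/-- If a matroid on `n` elements can be partitioned into `k` independent
sets, then its truncation to rank `⌈n/k⌉` can also be partitioned into `k` sets, each
independent in the truncation. -/
theorem truncation_preserves_partition {α : Type*} [DecidableEq α] [Fintype α]
    (Ind : Finset α → Prop)
    (h_empty : Ind ∅)
    (h_down : ∀ ⦃I J : Finset α⦄, Ind I → J ⊆ I → Ind J)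
    (h_exch : ∀ ⦃I J : Finset α⦄, Ind I → Ind J → I.card < J.card →
      ∃ e ∈ J \ I, Ind (insert e I))
    (k : ℕ) (hk : 0 < k)
    (P : Fin k → Finset α)
    (hdisj : ∀ i j, i ≠ j → Disjoint (P i) (P j))
    (hcover : Finset.univ.biUnion P = Finset.univ)
    (hind : ∀ i, Ind (P i)) :
    ∃ P' : Fin k → Finset α,
      (∀ i j, i ≠ j → Disjoint (P' i) (P' j)) ∧
      Finset.univ.biUnion P' = Finset.univ ∧
      ∀ i, Ind (P' i) ∧ (P' i).card ≤ (Fintype.card α + k - 1) / k := by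
  classical
  obtain ⟨r, hr⟩ : ∃ r, (Fintype.card α + k - 1) / k = r := ⟨_, rfl⟩
  rw [hr]
  have hkr : Fintype.card α ≤ k * r := by
    have h1 := Nat.div_add_mod (Fintype.card α + k - 1) k
    rw [hr] at h1
    have h2 : (Fintype.card α + k - 1) % k < k := Nat.mod_lt _ hk
    omega
  suffices H : ∀ N (P : Fin k → Finset α),
      (∀ i j, i ≠ j → Disjoint (P i) (P j)) →
      Finset.univ.biUnion P = Finset.univ →
      (∀ i, Ind (P i)) →
      (∑ i, (P i).card ^ 2) ≤ N →
      ∃ P' : Fin k → Finset α, (∀ i j, i ≠ j → Disjoint (P' i) (P' j)) ∧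
        Finset.univ.biUnion P' = Finset.univ ∧
        ∀ i, Ind (P' i) ∧ (P' i).card ≤ r by
    exact H _ P hdisj hcover hind le_rfl
  intro N
  induction N with
  | zero =>
    intro P hdisj hcover hind hsum
    refine ⟨P, hdisj, hcover, fun i => ⟨hind i, ?_⟩⟩
    have : (P i).card ^ 2 = 0 := by
      have h1 : (P i).card ^ 2 ≤ ∑ l, (P l).card ^ 2 := by
        simpa using Finset.single_le_sum (f := fun l => (P l).card ^ 2)
          (fun l _ => Nat.zero_le _) (Finset.mem_univ i)
      omega
    have : (P i).card = 0 := by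
      by_contra hc
      have : 1 ≤ (P i).card := Nat.one_le_iff_ne_zero.mpr hc
      nlinarith
    omega
  | succ N ih =>
    intro P hdisj hcover hind hsum
    by_cases hall : ∀ i, (P i).card ≤ r
    · exact ⟨P, hdisj, hcover, fun i => ⟨hind i, hall i⟩⟩
    push_neg at hall
    obtain ⟨i, hi⟩ := hall
    have hn : ∑ l, (P l).card = Fintype.card α := by
      rw [← Finset.card_biUnion (fun x _ y _ hxy => hdisj x y hxy), hcover,
        Finset.card_univ]
    -- find a small part
    have hex : ∃ j, (P j).card + 2 ≤ (P i).card := by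
      by_contra hc
      push_neg at hc
      have hlt : k * ((P i).card - 1) < Fintype.card α := by
        rw [← hn]
        calc k * ((P i).card - 1) = ∑ _l : Fin k, ((P i).card - 1) := by
              simp [Finset.sum_const, mul_comm]
          _ < ∑ l, (P l).card := by
              refine Finset.sum_lt_sum (fun l _ => ?_) ⟨i, Finset.mem_univ i, by omega⟩
              have := hc l; omega
      have hge : k * r ≤ k * ((P i).card - 1) := Nat.mul_le_mul_left k (by omega)
      omega
    obtain ⟨j, hj⟩ := hex
    have hij : i ≠ j := by intro h; rw [h] at hj; omega
    obtain ⟨e, he, hins⟩ := h_exch (hind j) (hind i) (by omega)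
    have heP : e ∈ P i := (Finset.mem_sdiff.mp he).1
    have heJ : e ∉ P j := (Finset.mem_sdiff.mp he).2
    have heOnly : ∀ l, l ≠ i → e ∉ P l := fun l hl hmem =>
      Finset.disjoint_left.mp (hdisj l i hl) hmem heP
    set Q : Fin k → Finset α :=
      fun l => if l = i then (P i).erase e else if l = j then insert e (P j) else P l
      with hQ
    have hQmem : ∀ l x, x ∈ Q l ↔ ((x ∈ P l ∧ ¬(l = i ∧ x = e)) ∨ (l = j ∧ x = e)) := by
      intro l x
      simp only [hQ]
      split_ifs with h1 h2
      · rw [h1]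
        simp only [Finset.mem_erase, hij, and_false, false_and, and_true, true_and,
          or_false, iff_self_and, not_and, eq_self_iff_true]
        tauto
      · rw [h2]
        have hji : j ≠ i := Ne.symm hij
        simp only [Finset.mem_insert, hji, false_and, not_false_iff, and_true, true_and]
        exact or_comm
      · simp only [h1, h2, false_and, and_true, not_false_iff, or_false, true_and]
    have hQdisj : ∀ a b, a ≠ b → Disjoint (Q a) (Q b) := by
      intro a b hab
      rw [Finset.disjoint_left]
      intro x hxa hxb
      rw [hQmem] at hxa hxb
      rcases hxa with ⟨hpa, hna⟩ | ⟨ha, rfl⟩ <;>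
        rcases hxb with ⟨hpb, hnb⟩ | ⟨hb, hxe⟩
      · exact Finset.disjoint_left.mp (hdisj a b hab) hpa hpb
      · subst hxe
        by_cases hai : a = i
        · exact hna ⟨hai, rfl⟩
        · exact heOnly a hai hpa
      · by_cases hbi : b = i
        · exact hnb ⟨hbi, rfl⟩
        · exact heOnly b hbi hpb
      · exact hab (ha.trans hb.symm)
    have hQcover : Finset.univ.biUnion Q = Finset.univ := by
      apply Finset.eq_univ_iff_forall.mpr
      intro x
      have hx : x ∈ Finset.univ.biUnion P := by rw [hcover]; exact Finset.mem_univ x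
      obtain ⟨l, _, hxl⟩ := Finset.mem_biUnion.mp hx
      rw [Finset.mem_biUnion]
      by_cases hxe : x = e
      · exact ⟨j, Finset.mem_univ j, (hQmem j x).mpr (Or.inr ⟨rfl, hxe⟩)⟩
      · exact ⟨l, Finset.mem_univ l, (hQmem l x).mpr (Or.inl ⟨hxl, fun h => hxe h.2⟩)⟩
    have hQind : ∀ l, Ind (Q l) := by
      intro l
      simp only [hQ]
      split_ifs with h1 h2
      · exact h_down (hind i) (Finset.erase_subset e (P i))
      · exact hins
      · exact hind l
    -- measure decreases
    have hQi : (Q i).card = (P i).card - 1 := by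
      simp only [hQ, if_pos rfl]
      exact Finset.card_erase_of_mem heP
    have hQj : (Q j).card = (P j).card + 1 := by
      simp only [hQ, if_neg (Ne.symm hij), if_pos rfl]
      exact Finset.card_insert_of_notMem heJ
    have hQrest : ∀ l, l ≠ i → l ≠ j → Q l = P l := by
      intro l h1 h2; simp only [hQ, if_neg h1, if_neg h2]
    have hjmem : j ∈ Finset.univ.erase i := Finset.mem_erase.mpr ⟨Ne.symm hij, Finset.mem_univ j⟩
    have hsplit : ∀ (f : Fin k → ℕ), ∑ l, f l
        = f i + (f j + ∑ l ∈ (Finset.univ.erase i).erase j, f l) := by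
      intro f
      rw [Finset.add_sum_erase _ f hjmem, Finset.add_sum_erase _ f (Finset.mem_univ i)]
    have hrest_eq : ∑ l ∈ (Finset.univ.erase i).erase j, (Q l).card ^ 2
        = ∑ l ∈ (Finset.univ.erase i).erase j, (P l).card ^ 2 := by
      refine Finset.sum_congr rfl fun l hl => ?_
      rw [Finset.mem_erase, Finset.mem_erase] at hl
      rw [hQrest l hl.2.1 hl.1]
    have hQsum : ∑ l, (Q l).card ^ 2 ≤ N := by
      rw [hsplit (fun l => (Q l).card ^ 2)] at *
      rw [hsplit (fun l => (P l).card ^ 2)] at hsum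
      rw [hrest_eq, hQi, hQj]
      obtain ⟨c, hc⟩ : ∃ c, (P i).card = c + 1 := ⟨(P i).card - 1, by omega⟩
      rw [hc] at hsum hj ⊢
      simp only [Nat.add_sub_cancel]
      nlinarith [hj, hsum]
    exact ih Q hQdisj hQcover hQind hQsum
end

section
/- Fix positive integers m, εm, and δm with 0 ≤ δ < ε < 1. Let W ⊆ [3m] with |W| = 2m − δm. Then the number of m-element sets S ⊆ [3m] such that |W \ S| ≤ m is at most C(2m − δm, m − δm) · C(2m + δm, δm), where C(·,·) denotes the binomial coefficient. -/
/-- For `W ⊆ [3m]` with `|W| = 2m − δm` (here `d = δm`, `e = εm`,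
`0 ≤ d < e < m`), the number of `m`-element sets `S ⊆ [3m]` with `|W \ S| ≤ m` is at most
`C(2m − δm, m − δm) · C(2m + δm, δm)`. -/
theorem witness_count (m d e : ℕ) (hm : 0 < m) (hde : d < e) (hem : e < m)
    (W : Finset ℕ) (hW : W ⊆ Finset.Icc 1 (3 * m)) (hWcard : W.card = 2 * m - d) :
    (((Finset.Icc 1 (3 * m)).powersetCard m).filter (fun S => (W \ S).card ≤ m)).card ≤
      Nat.choose (2 * m - d) (m - d) * Nat.choose (2 * m + d) d := by
  have hdm : d < m := hde.trans hem
  set N := Finset.Icc 1 (3 * m) with hN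
  have hNcard : N.card = 3 * m := by simp [hN]
  set V := N \ W with hV
  have hVcard : V.card = m + d := by
    rw [hV, Finset.card_sdiff_of_subset hW, hNcard, hWcard]; omega
  -- Step 1: injection into a biUnion of products
  have step1 : (((N.powersetCard m)).filter (fun S => (W \ S).card ≤ m)).card ≤
      ((Finset.range (d + 1)).biUnion
        (fun j => (W.powersetCard (m - j)) ×ˢ (V.powersetCard j))).card := by
    apply Finset.card_le_card_of_injOn (fun S => (W ∩ S, S \ W))
    · intro S hS
      simp only [Finset.mem_coe, Finset.mem_filter, Finset.mem_powersetCard] at hS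
      obtain ⟨⟨hSN, hScard⟩, hWS⟩ := hS
      have h1 : (W ∩ S).card + (W \ S).card = W.card := Finset.card_inter_add_card_sdiff W S
      have h2 : (S ∩ W).card + (S \ W).card = S.card := Finset.card_inter_add_card_sdiff S W
      rw [Finset.inter_comm] at h2
      have hj : (S \ W).card ≤ d := by omega
      simp only [Finset.mem_coe, Finset.mem_biUnion, Finset.mem_range, Finset.mem_product,
        Finset.mem_powersetCard]
      refine ⟨(S \ W).card, by omega, ⟨Finset.inter_subset_left, by omega⟩,
        ⟨?_, rfl⟩⟩
      · intro x hx
        rw [hV]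
        simp only [Finset.mem_sdiff] at hx ⊢
        exact ⟨hSN hx.1, hx.2⟩
    · intro S1 h1 S2 h2 heq
      simp only [Prod.mk.injEq] at heq
      have e1 : S1 = (W ∩ S1) ∪ (S1 \ W) := by
        ext x; simp only [Finset.mem_union, Finset.mem_inter, Finset.mem_sdiff]; tauto
      have e2 : S2 = (W ∩ S2) ∪ (S2 \ W) := by
        ext x; simp only [Finset.mem_union, Finset.mem_inter, Finset.mem_sdiff]; tauto
      rw [e1, e2, heq.1, heq.2]
  -- Step 2: card of biUnion ≤ sum
  have step2 : ((Finset.range (d + 1)).biUnion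
      (fun j => (W.powersetCard (m - j)) ×ˢ (V.powersetCard j))).card ≤
      ∑ j ∈ Finset.range (d + 1),
        Nat.choose (2 * m - d) (m - j) * Nat.choose (m + d) j := by
    refine (Finset.card_biUnion_le).trans ?_
    apply Finset.sum_le_sum
    intro j _
    rw [Finset.card_product, Finset.card_powersetCard, Finset.card_powersetCard,
      hWcard, hVcard]
  -- Step 3: the sum is at most the RHS via Vandermonde
  have step3 : ∑ j ∈ Finset.range (d + 1),
      Nat.choose (2 * m - d) (m - j) * Nat.choose (m + d) j ≤
      Nat.choose (2 * m - d) (m - d) * Nat.choose (2 * m + d) d := by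
    have hvan : Nat.choose (2 * m + d) d =
        ∑ j ∈ Finset.range (d + 1), Nat.choose (m + d) j * Nat.choose m (d - j) := by
      have : 2 * m + d = (m + d) + m := by ring
      rw [this, Nat.add_choose_eq]
      rw [Finset.Nat.sum_antidiagonal_eq_sum_range_succ
        (fun i j => Nat.choose (m + d) i * Nat.choose m j)]
    rw [hvan, Finset.mul_sum]
    apply Finset.sum_le_sum
    intro j hj
    simp only [Finset.mem_range] at hj
    have hjd : j ≤ d := by omega
    -- termwise: C(2m-d, m-j) ≤ C(2m-d, m-d) * C(m, d-j)
    have key : Nat.choose (2 * m - d) (m - j) ≤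
        Nat.choose (2 * m - d) (m - d) * Nat.choose m (d - j) := by
      have hid := Nat.choose_mul (n := 2 * m - d) (k := m - j) (s := m - d)
        (by omega)
      have h1 : (2 * m - d) - (m - d) = m := by omega
      have h2 : (m - j) - (m - d) = d - j := by omega
      rw [h1, h2] at hid
      calc Nat.choose (2 * m - d) (m - j)
          = Nat.choose (2 * m - d) (m - j) * 1 := by ring
        _ ≤ Nat.choose (2 * m - d) (m - j) * Nat.choose (m - j) (m - d) := by
            apply Nat.mul_le_mul_left
            exact Nat.choose_pos (by omega)
        _ = Nat.choose (2 * m - d) (m - d) * Nat.choose m (d - j) := hid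
    calc Nat.choose (2 * m - d) (m - j) * Nat.choose (m + d) j
        ≤ (Nat.choose (2 * m - d) (m - d) * Nat.choose m (d - j)) * Nat.choose (m + d) j :=
          Nat.mul_le_mul_right _ key
      _ = Nat.choose (2 * m - d) (m - d) * (Nat.choose (m + d) j * Nat.choose m (d - j)) := by
          ring
  exact (step1.trans step2).trans step3
end

section
/- Let m, α be positive integers with α dividing m, and Q the (m/α)-relaxation of the partition matroid on [(α+1)m] given by a partition into m parts of size α+1. Then the ground set [(α+1)m] can be partitioned into exactly α sets each independent in Q; moreover each such part can be chosen to be a basis (of size m + m/α). -/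
lemma div_eq_iff_aux (n d i : ℕ) (hd : 0 < d) : n / d = i ↔ i*d ≤ n ∧ n < i*d + d := by
  have h := Nat.div_add_mod n d
  have h2 := Nat.mod_lt n hd
  constructor
  · rintro rfl
    constructor <;> · rw [mul_comm]; omega
  · rintro ⟨a, b⟩
    exact Nat.div_eq_of_lt_le (by omega) (by rw [add_mul]; omega)

/-- The ground set `[(α+1)m]` can be partitioned into exactly `α` sets,
each independent in the `(m/α)`-relaxation `Q` of the partition matroid and each a
basis, i.e. of size `m + m/α`. -/
theorem relaxed_partition_matroid_base_partition (m α : ℕ) (hm : 0 < m) (hα : 0 < α)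
    (hdvd : α ∣ m)
    (P : Fin m → Finset ℕ)
    (hdisj : ∀ i j, i ≠ j → Disjoint (P i) (P j))
    (hcover : Finset.univ.biUnion P = Finset.Icc 1 ((α + 1) * m))
    (hsize : ∀ i, (P i).card = α + 1) :
    ∃ C : Fin α → Finset ℕ,
      (∀ i j, i ≠ j → Disjoint (C i) (C j)) ∧
      Finset.univ.biUnion C = Finset.Icc 1 ((α + 1) * m) ∧
      ∀ i, (∃ L ⊆ C i, L.card ≤ m / α ∧ ∀ j, ((C i \ L) ∩ P j).card ≤ 1) ∧
        (C i).card = m + m / α := by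
  classical
  set d := m / α with hd_def
  have hd : 0 < d := Nat.div_pos (Nat.le_of_dvd hm hdvd) hα
  have hmd : α * d = m := Nat.mul_div_cancel' hdvd
  -- enumeration of each part
  set e : Fin m → Fin (α+1) → ℕ := fun j k => ((P j).orderIsoOfFin (hsize j) k : ℕ) with he_def
  have hmem : ∀ j k, e j k ∈ P j := fun j k => ((P j).orderIsoOfFin (hsize j) k).2
  have hinj : ∀ j j' k k', e j k = e j' k' → j = j' ∧ k = k' := by
    intro j j' k k' h
    have hjj : j = j' := by
      by_contra hne
      exact Finset.disjoint_left.1 (hdisj j j' hne) (hmem j k) (h ▸ hmem j' k')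
    subst hjj
    exact ⟨rfl, ((P j).orderIsoOfFin (hsize j)).injective (Subtype.ext h)⟩
  have himg : ∀ j, Finset.univ.image (e j) = P j := by
    intro j
    apply Finset.eq_of_subset_of_card_le
    · intro x hx
      obtain ⟨k, _, rfl⟩ := Finset.mem_image.1 hx
      exact hmem j k
    · rw [Finset.card_image_of_injective _ (fun k k' h => (hinj j j k k' h).2),
        Finset.card_univ, Fintype.card_fin, hsize]
  -- the classes
  set A : Fin α → Finset ℕ :=
    fun i => Finset.univ.image (fun j : Fin m => e j i.castSucc) with hA_def
  set L : Fin α → Finset ℕ :=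
    fun i => (Finset.univ.filter fun j : Fin m => (j : ℕ) / d = (i : ℕ)).image
      (fun j => e j (Fin.last α)) with hL_def
  set C : Fin α → Finset ℕ := fun i => A i ∪ L i with hC_def
  have hA_mem : ∀ i x, x ∈ A i ↔ ∃ j, e j i.castSucc = x := by
    intro i x; simp [hA_def]
  have hL_mem : ∀ i x, x ∈ L i ↔ ∃ j : Fin m, (j : ℕ) / d = (i : ℕ) ∧ e j (Fin.last α) = x := by
    intro i x; simp [hL_def]
  have hcs_ne : ∀ i : Fin α, i.castSucc ≠ Fin.last α := by
    intro i h
    have := congrArg Fin.val h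
    simp [Fin.castSucc] at this
    omega
  -- disjointness
  have hCdisj : ∀ i i', i ≠ i' → Disjoint (C i) (C i') := by
    intro i i' hne
    rw [Finset.disjoint_left]
    intro x hx hx'
    rcases Finset.mem_union.1 hx with h1 | h1 <;> rcases Finset.mem_union.1 hx' with h2 | h2
    · obtain ⟨j, rfl⟩ := (hA_mem i x).1 h1
      obtain ⟨j', hj'⟩ := (hA_mem i' _).1 h2
      have := (hinj j' j _ _ hj').2
      exact hne (Fin.castSucc_injective _ this).symm
    · obtain ⟨j, rfl⟩ := (hA_mem i x).1 h1
      obtain ⟨j', _, hj'⟩ := (hL_mem i' _).1 h2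
      exact hcs_ne i ((hinj j' j _ _ hj').2.symm)
    · obtain ⟨j, _, rfl⟩ := (hL_mem i x).1 h1
      obtain ⟨j', hj'⟩ := (hA_mem i' _).1 h2
      exact hcs_ne i' ((hinj j' j _ _ hj').2)
    · obtain ⟨j, hji, rfl⟩ := (hL_mem i x).1 h1
      obtain ⟨j', hji', hj'⟩ := (hL_mem i' _).1 h2
      have : j' = j := (hinj j' j _ _ hj').1
      exact hne (Fin.ext (by rw [← hji, ← hji', this]))
  -- cover
  have hCcover : Finset.univ.biUnion C = Finset.Icc 1 ((α + 1) * m) := by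
    rw [← hcover]
    ext x
    simp only [Finset.mem_biUnion, Finset.mem_univ, true_and]
    constructor
    · rintro ⟨i, hi⟩
      rcases Finset.mem_union.1 hi with h1 | h1
      · obtain ⟨j, rfl⟩ := (hA_mem i x).1 h1
        exact ⟨j, hmem j _⟩
      · obtain ⟨j, _, rfl⟩ := (hL_mem i x).1 h1
        exact ⟨j, hmem j _⟩
    · rintro ⟨j, hj⟩
      rw [← himg j] at hj
      obtain ⟨k, _, rfl⟩ := Finset.mem_image.1 hj
      by_cases hk : (k : ℕ) < α
      · refine ⟨⟨k, hk⟩, Finset.mem_union_left _ ?_⟩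
        rw [hA_mem]
        exact ⟨j, congrArg (e j) (Fin.ext rfl)⟩
      · have hkk : k = Fin.last α := Fin.ext (by have := k.isLt; simp [Fin.last]; omega)
        have hjd : (j : ℕ) / d < α := by
          rw [Nat.div_lt_iff_lt_mul hd]
          calc (j : ℕ) < m := j.isLt
          _ = α * d := hmd.symm
        refine ⟨⟨(j : ℕ) / d, hjd⟩, Finset.mem_union_right _ ?_⟩
        rw [hL_mem]
        exact ⟨j, rfl, by rw [hkk]⟩
  -- cardinalities
  have hAL_disj : ∀ i, Disjoint (A i) (L i) := by
    intro i
    rw [Finset.disjoint_left]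
    intro x hx hx'
    obtain ⟨j, rfl⟩ := (hA_mem i x).1 hx
    obtain ⟨j', _, hj'⟩ := (hL_mem i _).1 hx'
    exact hcs_ne i ((hinj j' j _ _ hj').2.symm)
  have hA_card : ∀ i, (A i).card = m := by
    intro i
    rw [hA_def]
    rw [Finset.card_image_of_injective _ (fun j j' h => (hinj j j' _ _ h).1),
      Finset.card_univ, Fintype.card_fin]
  have hS_card : ∀ i : Fin α,
      (Finset.univ.filter fun j : Fin m => (j : ℕ) / d = (i : ℕ)).card = d := by
    intro i
    have : (Finset.univ.filter fun j : Fin m => (j : ℕ) / d = (i : ℕ)).map Fin.valEmbedding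
        = Finset.Ico ((i : ℕ) * d) ((i : ℕ) * d + d) := by
      ext n
      simp only [Finset.mem_map, Finset.mem_filter, Finset.mem_univ, true_and,
        Fin.valEmbedding_apply, Finset.mem_Ico]
      constructor
      · rintro ⟨j, hj, rfl⟩
        have := (div_eq_iff_aux (j : ℕ) d (i : ℕ) hd).1 hj
        omega
      · rintro ⟨h1, h2⟩
        have hn : n < m := by
          have : ((i : ℕ) + 1) * d ≤ α * d := Nat.mul_le_mul_right d i.isLt
          rw [hmd] at this
          rw [add_mul] at this
          omega
        exact ⟨⟨n, hn⟩, (div_eq_iff_aux n d (i : ℕ) hd).2 ⟨h1, h2⟩, rfl⟩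
    have := congrArg Finset.card this
    rwa [Finset.card_map, Nat.card_Ico, Nat.add_sub_cancel_left] at this
  have hL_card : ∀ i, (L i).card = d := by
    intro i
    rw [hL_def]
    rw [Finset.card_image_of_injective _ (fun j j' h => (hinj j j' _ _ h).1)]
    exact hS_card i
  have hC_card : ∀ i, (C i).card = m + d := by
    intro i
    rw [hC_def]
    rw [Finset.card_union_of_disjoint (hAL_disj i), hA_card, hL_card]
  refine ⟨C, hCdisj, hCcover, fun i => ⟨⟨L i, Finset.subset_union_right, (hL_card i).le, ?_⟩,
    hC_card i⟩⟩
  intro j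
  have hsub : (C i \ L i) ∩ P j ⊆ {e j i.castSucc} := by
    intro x hx
    obtain ⟨hx1, hx2⟩ := Finset.mem_inter.1 hx
    obtain ⟨hx3, hx4⟩ := Finset.mem_sdiff.1 hx1
    have hxA : x ∈ A i := by
      rcases Finset.mem_union.1 hx3 with h | h
      · exact h
      · exact absurd h hx4
    obtain ⟨j', rfl⟩ := (hA_mem i x).1 hxA
    have : j' = j := by
      by_contra hne
      exact Finset.disjoint_left.1 (hdisj j' j hne) (hmem j' _) hx2
    subst this
    exact Finset.mem_singleton_self _
  calc ((C i \ L i) ∩ P j).card ≤ ({e j i.castSucc} : Finset ℕ).card := Finset.card_le_card hsub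
  _ = 1 := Finset.card_singleton _
end

section
/- For every integer α ≥ 3, the quantity γ(α) = (1 + 1/α)^(α − 1 − 1/α) · (1/α)^(1/α) satisfies γ(α) > 1. In particular γ(3) > 1.11. -/
private lemma log_lb' (a : ℝ) (ha : 0 < a) : 1/(a+1) ≤ Real.log (1 + 1/a) := by
  have h := Real.one_sub_inv_le_log_of_pos (show (0:ℝ) < 1 + 1/a by positivity)
  have heq : (1:ℝ) - (1 + 1/a)⁻¹ = 1/(a+1) := by
    rw [inv_eq_one_div]
    field_simp
    ring
  linarith [heq ▸ h]

private lemma log_ub' (x : ℝ) (hx : 0 < x) : Real.log x ≤ 2*(Real.sqrt x - 1) := by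
  have h2 := Real.log_le_sub_one_of_pos (Real.sqrt_pos.mpr hx)
  rw [Real.log_sqrt hx.le] at h2
  linarith

private lemma key' (a : ℝ) (ha : 3 ≤ a) (hcase : a = 3 ∨ a = 4 ∨ 5 ≤ a) :
    Real.log (a+1) < a*(a-1) * Real.log (1 + 1/a) := by
  have ha0 : (0:ℝ) < a := by linarith
  have hL := log_lb' a ha0
  have hmul : a*(a-1)/(a+1) ≤ a*(a-1) * Real.log (1 + 1/a) := by
    have h1 : a*(a-1) * (1/(a+1)) ≤ a*(a-1) * Real.log (1+1/a) := by
      apply mul_le_mul_of_nonneg_left hL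
      nlinarith
    calc a*(a-1)/(a+1) = a*(a-1) * (1/(a+1)) := by ring
    _ ≤ _ := h1
  rcases hcase with h3 | h4 | h5
  · subst h3
    have h4eq : Real.log (3+1) = 2 * Real.log 2 := by
      rw [show (3:ℝ)+1 = 2^2 by norm_num, Real.log_pow]; push_cast; ring
    rw [h4eq]
    linarith [Real.log_two_lt_d9, hmul]
  · subst h4
    have h8 : Real.log (4+1) ≤ 3 * Real.log 2 := by
      calc Real.log (4+1) ≤ Real.log (2^3) := by
            apply Real.log_le_log (by norm_num)
            norm_num
      _ = 3 * Real.log 2 := by rw [Real.log_pow]; push_cast; ring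
    have hd9 := Real.log_two_lt_d9
    norm_num at hmul h8 ⊢
    nlinarith [hmul, h8, hd9]
  · -- a ≥ 5
    have hs2 : Real.sqrt (a+1) ^ 2 = a + 1 := Real.sq_sqrt (by linarith)
    have hs0 : 0 ≤ Real.sqrt (a+1) := Real.sqrt_nonneg _
    have hub := log_ub' (a+1) (by linarith)
    have hmid : 2*(Real.sqrt (a+1) - 1) < a*(a-1)/(a+1) := by
      rw [lt_div_iff₀ (by linarith : (0:ℝ) < a+1)]
      nlinarith [sq_nonneg (Real.sqrt (a+1) - 5/2), hs2, hs0]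
    linarith

/-- For every integer `α ≥ 3`,
`γ(α) = (1 + 1/α)^(α − 1 − 1/α) · (1/α)^(1/α) > 1`, and `γ(3) > 1.11`. -/
theorem gamma_gt_one :
    (∀ α : ℕ, 3 ≤ α →
      (1 + 1 / (α : ℝ)) ^ ((α : ℝ) - 1 - 1 / (α : ℝ)) *
        (1 / (α : ℝ)) ^ (1 / (α : ℝ)) > 1) ∧
    (1 + 1 / (3 : ℝ)) ^ ((3 : ℝ) - 1 - 1 / (3 : ℝ)) *
        (1 / (3 : ℝ)) ^ (1 / (3 : ℝ)) > 1.11 := by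
  constructor
  · intro α hα
    set a : ℝ := (α : ℝ) with ha_def
    have ha3 : (3:ℝ) ≤ a := by rw [ha_def]; exact_mod_cast hα
    have ha0 : (0:ℝ) < a := by linarith
    have hA : (0:ℝ) < 1 + 1/a := by positivity
    have hB : (0:ℝ) < 1/a := by positivity
    have hcase : a = 3 ∨ a = 4 ∨ 5 ≤ a := by
      rcases Nat.lt_or_ge α 5 with h | h
      · interval_cases α
        · left; norm_num [ha_def]
        · right; left; norm_num [ha_def]
      · right; right; rw [ha_def]; exact_mod_cast h
    have hkey := key' a ha3 hcase
    set L := Real.log (1 + 1/a) with hL_def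
    have hsplit : Real.log (a+1) = Real.log a + L := by
      rw [hL_def, ← Real.log_mul (ne_of_gt ha0) (ne_of_gt hA)]
      congr 1
      field_simp
    have hy : (0:ℝ) < (1 + 1/a) ^ (a - 1 - 1/a) * (1/a) ^ (1/a) := by
      positivity
    have hlog : 0 < Real.log ((1 + 1/a) ^ (a - 1 - 1/a) * (1/a) ^ (1/a)) := by
      rw [Real.log_mul (by positivity) (by positivity),
        Real.log_rpow hA, Real.log_rpow hB, one_div, Real.log_inv, ← one_div,
        ← hL_def]
      have hfrac : (a - 1 - 1/a) * L + 1/a * -Real.log a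
          = (a*(a-1)*L - (Real.log a + L)) / a := by
        field_simp
        ring
      rw [hfrac]
      apply div_pos _ ha0
      rw [← hsplit]
      linarith
    calc (1:ℝ) = Real.exp 0 := Real.exp_zero.symm
      _ < Real.exp (Real.log ((1 + 1/a) ^ (a - 1 - 1/a) * (1/a) ^ (1/a))) :=
          Real.exp_lt_exp.mpr hlog
      _ = _ := Real.exp_log hy
  · -- gamma(3) > 1.11
    have h1 : ((3:ℝ) - 1 - 1/3) = (5:ℝ)/3 := by norm_num
    rw [h1]
    set x : ℝ := (1 + 1/(3:ℝ)) ^ ((5:ℝ)/3) * (1/(3:ℝ)) ^ ((1:ℝ)/3) with hx_def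
    have hx0 : (0:ℝ) < x := by positivity
    have e1 : ((1 + 1/(3:ℝ)) ^ ((5:ℝ)/3)) ^ (3:ℕ) = (1 + 1/(3:ℝ)) ^ (5:ℕ) := by
      rw [← Real.rpow_natCast ((1 + 1/(3:ℝ)) ^ ((5:ℝ)/3)) 3,
        ← Real.rpow_mul (by norm_num : (0:ℝ) ≤ 1 + 1/3),
        show (5:ℝ)/3 * ((3:ℕ):ℝ) = ((5:ℕ):ℝ) by norm_num,
        Real.rpow_natCast]
    have e2 : ((1/(3:ℝ)) ^ ((1:ℝ)/3)) ^ (3:ℕ) = 1/(3:ℝ) := by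
      rw [← Real.rpow_natCast ((1/(3:ℝ)) ^ ((1:ℝ)/3)) 3,
        ← Real.rpow_mul (by norm_num : (0:ℝ) ≤ 1/(3:ℝ)),
        show (1:ℝ)/3 * ((3:ℕ):ℝ) = (1:ℝ) by norm_num,
        Real.rpow_one]
    have hcube : x ^ (3:ℕ) = 1024/729 := by
      rw [hx_def, mul_pow, e1, e2]
      norm_num
    by_contra hc
    push_neg at hc
    have hle : x ^ (3:ℕ) ≤ (1.11:ℝ) ^ (3:ℕ) := pow_le_pow_left₀ hx0.le hc 3
    rw [hcube] at hle
    norm_num at hle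
end

section
/- For every real ε with 0 < ε ≤ 1/10, the quantity 27·ε^ε / (4·(2+ε)^(2+ε)) is at least 1.128, where by convention ε^ε = exp(ε ln ε). -/
open Real

lemma xlogx_lower (ε : ℝ) (h0 : 0 < ε) (h1 : ε ≤ 1 / 10) :
    Real.log (1/10) * (1/10) ≤ Real.log ε * ε := by
  set t : ℝ := 10 * ε with ht
  have ht0 : 0 < t := by positivity
  have ht1 : t ≤ 1 := by simp [ht]; linarith
  have hε : ε = t / 10 := by rw [ht]; ring
  have hlogε : Real.log ε = Real.log t - Real.log 10 := by
    rw [hε, Real.log_div (ne_of_gt ht0) (by norm_num)]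
  have hL : (1:ℝ) ≤ Real.log 10 := by
    rw [Real.le_log_iff_exp_le (by norm_num)]
    have := Real.exp_one_lt_d9
    linarith
  have hu : t - 1 ≤ t * Real.log t := by
    have h := Real.log_le_sub_one_of_pos (show (0:ℝ) < t⁻¹ by positivity)
    rw [Real.log_inv] at h
    have : 1 - t⁻¹ ≤ Real.log t := by linarith
    have h2 : t * (1 - t⁻¹) ≤ t * Real.log t :=
      mul_le_mul_of_nonneg_left this (le_of_lt ht0)
    have h3 : t * (1 - t⁻¹) = t - 1 := by field_simp
    linarith
  have hlog110 : Real.log (1/10 : ℝ) = -Real.log 10 := by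
    rw [one_div, Real.log_inv]
  rw [hlog110, hlogε, hε]
  nlinarith [mul_nonneg (sub_nonneg.2 ht1) (sub_nonneg.2 hL)]

lemma numeric_bound :
    1.128 * (4 * ((21/10:ℝ) ^ ((21/10):ℝ))) ≤ 27 * ((1/10:ℝ) ^ ((1/10):ℝ)) := by
  have hb : (0:ℝ) ≤ 27 * ((1/10:ℝ) ^ ((1/10):ℝ)) := by positivity
  apply le_of_pow_le_pow_left₀ (n := 10) (by norm_num) hb
  have e1 : ((21/10:ℝ) ^ ((21/10):ℝ)) ^ (10:ℕ) = (21/10:ℝ) ^ (21:ℕ) := by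
    rw [← Real.rpow_natCast ((21/10:ℝ) ^ ((21/10):ℝ)) 10,
        ← Real.rpow_mul (by norm_num), ← Real.rpow_natCast (21/10:ℝ) 21]
    norm_num
  have e2 : ((1/10:ℝ) ^ ((1/10):ℝ)) ^ (10:ℕ) = (1/10:ℝ) := by
    rw [← Real.rpow_natCast ((1/10:ℝ) ^ ((1/10):ℝ)) 10,
        ← Real.rpow_mul (by norm_num)]
    norm_num
  rw [mul_pow, mul_pow, mul_pow, e1, e2]
  norm_num

/-- For every real `0 < ε ≤ 1/10`,
`27 · ε^ε / (4 · (2+ε)^(2+ε)) ≥ 1.128` (real exponentiation). -/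
theorem stirling_base_bound (ε : ℝ) (h0 : 0 < ε) (h1 : ε ≤ 1 / 10) :
    27 * ε ^ ε / (4 * (2 + ε) ^ (2 + ε)) ≥ 1.128 := by
  have h2 : (0:ℝ) < 2 + ε := by linarith
  have hεε : ε ^ ε = Real.exp (Real.log ε * ε) := Real.rpow_def_of_pos h0 ε
  have h2ε : (2+ε) ^ (2+ε) = Real.exp (Real.log (2+ε) * (2+ε)) :=
    Real.rpow_def_of_pos h2 (2+ε)
  -- bound exponents
  have hA : Real.log (1/10) * (1/10) ≤ Real.log ε * ε := xlogx_lower ε h0 h1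
  have hB : Real.log (2+ε) * (2+ε) ≤ Real.log (21/10) * (21/10) := by
    have hle : 2 + ε ≤ 21/10 := by linarith
    have hlog : Real.log (2+ε) ≤ Real.log (21/10) := Real.log_le_log h2 hle
    have hlnn : 0 ≤ Real.log (2+ε) := Real.log_nonneg (by linarith)
    nlinarith
  have hexpA : Real.exp (Real.log (1/10) * (1/10)) ≤ Real.exp (Real.log ε * ε) :=
    Real.exp_le_exp.2 hA
  have hexpB : Real.exp (Real.log (2+ε) * (2+ε)) ≤ Real.exp (Real.log (21/10) * (21/10)) :=
    Real.exp_le_exp.2 hB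
  have hEA : Real.exp (Real.log (1/10) * (1/10)) = (1/10:ℝ) ^ ((1/10):ℝ) :=
    (Real.rpow_def_of_pos (by norm_num) _).symm
  have hEB : Real.exp (Real.log (21/10) * (21/10)) = (21/10:ℝ) ^ ((21/10):ℝ) :=
    (Real.rpow_def_of_pos (by norm_num) _).symm
  have hnum := numeric_bound
  rw [hεε, h2ε, ge_iff_le, le_div_iff₀ (by positivity)]
  rw [hEA] at hexpA
  rw [hEB] at hexpB
  nlinarith [Real.exp_pos (Real.log (2+ε) * (2+ε)), Real.exp_pos (Real.log ε * ε)]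
end

section
/- Let M = (E, I) be a matroid with pairwise distinct weights w : E → ℝ and let B* be the (unique) maximum-weight basis. An element d ∈ E is not in B* if and only if there exists a circuit C of M with d ∈ C and w(d) = min{w(e) : e ∈ C}. -/
/-- A circuit: a minimal dependent set. -/
def IsCircuit {α : Type*} [DecidableEq α] (Ind : Finset α → Prop) (C : Finset α) : Prop :=
  ¬ Ind C ∧ ∀ e ∈ C, Ind (C.erase e)

/-- A basis: a maximal independent set. -/
def IsBasis {α : Type*} [DecidableEq α] (Ind : Finset α → Prop) (B : Finset α) : Prop :=
  Ind B ∧ ∀ x ∉ B, ¬ Ind (insert x B)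

section Aux

variable {α : Type*} [DecidableEq α] {Ind : Finset α → Prop}

/-- Grow an independent set to the size of a larger independent set, staying in the union. -/
lemma aux_grow
    (h_exch : ∀ ⦃I J : Finset α⦄, Ind I → Ind J → I.card < J.card →
      ∃ e ∈ J \ I, Ind (insert e I)) :
    ∀ (n : ℕ) (I J : Finset α), Ind I → Ind J → I.card + n = J.card →
      ∃ K, I ⊆ K ∧ K ⊆ I ∪ J ∧ Ind K ∧ K.card = J.card
  | 0, I, J, hI, _, hc => ⟨I, Finset.Subset.refl _, Finset.subset_union_left, hI, by omega⟩
  | n+1, I, J, hI, hJ, hc => by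
    obtain ⟨e, he, hIe⟩ := h_exch hI hJ (by omega)
    have heJ : e ∈ J := (Finset.mem_sdiff.mp he).1
    have heI : e ∉ I := (Finset.mem_sdiff.mp he).2
    obtain ⟨K, h1, h2, h3, h4⟩ := aux_grow h_exch n (insert e I) J hIe hJ
      (by rw [Finset.card_insert_of_notMem heI]; omega)
    refine ⟨K, (Finset.subset_insert _ _).trans h1, h2.trans ?_, h3, h4⟩
    intro x hx
    rcases Finset.mem_union.mp hx with h | h
    · rcases Finset.mem_insert.mp h with rfl | h
      · exact Finset.mem_union_right _ heJ
      · exact Finset.mem_union_left _ h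
    · exact Finset.mem_union_right _ h

end Aux

/-- With distinct weights, an element `d` is not in the maximum-weight
basis `B*` iff there is a circuit `C` containing `d` in which `d` has minimum weight. -/
theorem not_in_max_basis_iff_min_of_circuit {α : Type*} [DecidableEq α] [Fintype α]
    (Ind : Finset α → Prop)
    (h_empty : Ind ∅)
    (h_down : ∀ ⦃I J : Finset α⦄, Ind I → J ⊆ I → Ind J)
    (h_exch : ∀ ⦃I J : Finset α⦄, Ind I → Ind J → I.card < J.card →
      ∃ e ∈ J \ I, Ind (insert e I))
    (w : α → ℝ) (hw : Function.Injective w)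
    (Bstar : Finset α) (hB : IsBasis Ind Bstar)
    (hmax : ∀ B : Finset α, IsBasis Ind B → ∑ e ∈ B, w e ≤ ∑ e ∈ Bstar, w e)
    (d : α) :
    d ∉ Bstar ↔ ∃ C : Finset α, IsCircuit Ind C ∧ d ∈ C ∧ ∀ e ∈ C, w d ≤ w e := by
  classical
  -- every independent set has card at most |Bstar|
  have card_le : ∀ J : Finset α, Ind J → J.card ≤ Bstar.card := by
    intro J hJ
    by_contra hlt
    push_neg at hlt
    obtain ⟨e, he, hins⟩ := h_exch hB.1 hJ hlt
    exact hB.2 e (Finset.mem_sdiff.mp he).2 hins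
  -- any independent set of full cardinality is a basis
  have basis_of_card : ∀ B : Finset α, Ind B → B.card = Bstar.card → IsBasis Ind B := by
    intro B hBi hc
    refine ⟨hBi, fun x hx hins => ?_⟩
    have := card_le _ hins
    rw [Finset.card_insert_of_notMem hx] at this
    omega
  constructor
  · -- forward direction
    intro hd
    -- insert d Bstar is dependent
    have hdep : ¬ Ind (insert d Bstar) := hB.2 d hd
    -- pick a minimal-cardinality dependent subset of insert d Bstar
    let T := (insert d Bstar).powerset.filter (fun S => ¬ Ind S)
    have hTne : T.Nonempty := ⟨insert d Bstar, by simp [T, hdep]⟩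
    obtain ⟨C, hCT, hCmin⟩ := T.exists_min_image Finset.card hTne
    have hCsub : C ⊆ insert d Bstar := Finset.mem_powerset.mp (Finset.mem_filter.mp hCT).1
    have hCdep : ¬ Ind C := (Finset.mem_filter.mp hCT).2
    have hCcirc : IsCircuit Ind C := by
      refine ⟨hCdep, fun e heC => ?_⟩
      by_contra hdep'
      have hmem : C.erase e ∈ T := by
        refine Finset.mem_filter.mpr ⟨Finset.mem_powerset.mpr
          ((Finset.erase_subset _ _).trans hCsub), hdep'⟩
      have := hCmin _ hmem
      have := Finset.card_erase_of_mem heC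
      have : 0 < C.card := Finset.card_pos.mpr ⟨e, heC⟩
      omega
    have hdC : d ∈ C := by
      by_contra hdC
      have : C ⊆ Bstar := by
        intro x hx
        rcases Finset.mem_insert.mp (hCsub hx) with rfl | h
        · exact absurd hx hdC
        · exact h
      exact hCdep (h_down hB.1 this)
    refine ⟨C, hCcirc, hdC, fun e heC => ?_⟩
    rcases eq_or_ne e d with rfl | hed
    · exact le_refl _
    have heB : e ∈ Bstar := by
      rcases Finset.mem_insert.mp (hCsub heC) with h | h
      · exact absurd h hed
      · exact h
    -- A := insert d (Bstar.erase e) is independent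
    set A : Finset α := insert d (Bstar.erase e) with hA
    have hdA : d ∉ Bstar.erase e := fun h => hd (Finset.mem_of_mem_erase h)
    have hcardA : A.card = Bstar.card := by
      rw [hA, Finset.card_insert_of_notMem hdA, Finset.card_erase_of_mem heB]
      have : 0 < Bstar.card := Finset.card_pos.mpr ⟨e, heB⟩
      omega
    have hCeA : C.erase e ⊆ A := by
      have : A = (insert d Bstar).erase e := by
        rw [Finset.erase_insert_of_ne (Ne.symm hed)]
      rw [this]
      exact Finset.erase_subset_erase _ hCsub
    have hIndA : Ind A := by
      by_contra hAdep
      -- take a maximum-cardinality independent subset of A containing C.erase e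
      let T2 := A.powerset.filter (fun I => Ind I ∧ C.erase e ⊆ I)
      have hT2ne : T2.Nonempty :=
        ⟨C.erase e, Finset.mem_filter.mpr ⟨Finset.mem_powerset.mpr hCeA,
          hCcirc.2 e heC, Finset.Subset.refl _⟩⟩
      obtain ⟨I, hIT, hImax⟩ := T2.exists_max_image Finset.card hT2ne
      have hIsub : I ⊆ A := Finset.mem_powerset.mp (Finset.mem_filter.mp hIT).1
      have hIind : Ind I := (Finset.mem_filter.mp hIT).2.1
      have hCeI : C.erase e ⊆ I := (Finset.mem_filter.mp hIT).2.2
      have hIne : I ≠ A := fun h => hAdep (h ▸ hIind)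
      have hIlt : I.card < Bstar.card := by
        rw [← hcardA]
        exact Finset.card_lt_card (lt_of_le_of_ne hIsub hIne)
      obtain ⟨x, hx, hxI⟩ := h_exch hIind hB.1 hIlt
      have hxB : x ∈ Bstar := (Finset.mem_sdiff.mp hx).1
      have hxnI : x ∉ I := (Finset.mem_sdiff.mp hx).2
      have hxe : x ≠ e := by
        rintro rfl
        have : C ⊆ insert x I := by
          intro y hy
          rcases eq_or_ne y x with rfl | hne
          · exact Finset.mem_insert_self _ _
          · exact Finset.mem_insert_of_mem (hCeI (Finset.mem_erase.mpr ⟨hne, hy⟩))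
        exact hCdep (h_down hxI this)
      have hxA : x ∈ A := Finset.mem_insert_of_mem (Finset.mem_erase.mpr ⟨hxe, hxB⟩)
      have hmem : insert x I ∈ T2 := Finset.mem_filter.mpr
        ⟨Finset.mem_powerset.mpr (Finset.insert_subset hxA hIsub), hxI,
          hCeI.trans (Finset.subset_insert _ _)⟩
      have := hImax _ hmem
      rw [Finset.card_insert_of_notMem hxnI] at this
      omega
    -- A is a basis, apply maximality of Bstar
    have hAbasis := basis_of_card A hIndA hcardA
    have hsum := hmax A hAbasis
    have h1 : ∑ x ∈ A, w x = w d + (∑ x ∈ Bstar, w x - w e) := by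
      rw [hA, Finset.sum_insert hdA]
      have := Finset.sum_erase_add Bstar w heB
      linarith
    linarith
  · -- backward direction
    rintro ⟨C, hCcirc, hdC, hmin⟩ hdB
    have hI0 : Ind (C.erase d) := hCcirc.2 d hdC
    have hcard0 : (C.erase d).card ≤ Bstar.card := card_le _ hI0
    obtain ⟨n, hn⟩ : ∃ n, (C.erase d).card + n = Bstar.card := ⟨_, Nat.add_sub_cancel' hcard0⟩
    obtain ⟨B', hsub1, hsub2, hB'ind, hB'card⟩ :=
      aux_grow h_exch n (C.erase d) Bstar hI0 hB.1 hn
    have hdB' : d ∉ B' := by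
      intro hdB'
      have : C ⊆ B' := by
        intro y hy
        rcases eq_or_ne y d with rfl | hne
        · exact hdB'
        · exact hsub1 (Finset.mem_erase.mpr ⟨hne, hy⟩)
      exact hCcirc.1 (h_down hB'ind this)
    -- exchange into Bstar.erase d
    have hIndBd : Ind (Bstar.erase d) := h_down hB.1 (Finset.erase_subset _ _)
    have hcardBd : (Bstar.erase d).card < B'.card := by
      rw [hB'card, Finset.card_erase_of_mem hdB]
      have : 0 < Bstar.card := Finset.card_pos.mpr ⟨d, hdB⟩
      omega
    obtain ⟨f, hf, hfins⟩ := h_exch hIndBd hB'ind hcardBd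
    have hfB' : f ∈ B' := (Finset.mem_sdiff.mp hf).1
    have hfnBd : f ∉ Bstar.erase d := (Finset.mem_sdiff.mp hf).2
    have hfd : f ≠ d := fun h => hdB' (h ▸ hfB')
    have hfnB : f ∉ Bstar := fun h => hfnBd (Finset.mem_erase.mpr ⟨hfd, h⟩)
    have hfC : f ∈ C.erase d := by
      rcases Finset.mem_union.mp (hsub2 hfB') with h | h
      · exact h
      · exact absurd h hfnB
    have hfCmem : f ∈ C := Finset.mem_of_mem_erase hfC
    have hwdf : w d < w f := by
      have h1 := hmin f hfCmem
      have h2 : w d ≠ w f := fun h => hfd (hw h).symm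
      exact lt_of_le_of_ne h1 h2
    -- B'' := insert f (Bstar.erase d) is a heavier basis
    have hcardB'' : (insert f (Bstar.erase d)).card = Bstar.card := by
      rw [Finset.card_insert_of_notMem hfnBd, Finset.card_erase_of_mem hdB]
      have : 0 < Bstar.card := Finset.card_pos.mpr ⟨d, hdB⟩
      omega
    have hB''basis := basis_of_card _ hfins hcardB''
    have hsum := hmax _ hB''basis
    have h1 : ∑ x ∈ insert f (Bstar.erase d), w x = w f + (∑ x ∈ Bstar, w x - w d) := by
      rw [Finset.sum_insert hfnBd]
      have := Finset.sum_erase_add Bstar w hdB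
      linarith
    linarith
end

section
/- Let M be a matroid, w : E → ℝ distinct weights, and S ⊆ E a dependent set. Order S by decreasing weight as s₁, …, s_{|S|} and let j be the least index such that {s₁, …, s_j} is dependent. Then s_j is not in the maximum-weight basis of M. -/
lemma exists_maximal_ext {α : Type*} [DecidableEq α] (Ind : Finset α → Prop)
    (A X : Finset α) (hAX : A ⊆ X) (hA : Ind A) :
    ∃ D, A ⊆ D ∧ D ⊆ X ∧ Ind D ∧ ∀ x ∈ X, x ∉ D → ¬ Ind (insert x D) := by
  classical
  have hne : (X.powerset.filter (fun D => A ⊆ D ∧ Ind D)).Nonempty :=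
    ⟨A, by simp [hAX, hA]⟩
  obtain ⟨D, hD, hmax⟩ := Finset.exists_max_image _ Finset.card hne
  simp only [Finset.mem_filter, Finset.mem_powerset] at hD
  refine ⟨D, hD.2.1, hD.1, hD.2.2, ?_⟩
  intro x hxX hxD hind
  have h1 : insert x D ∈ X.powerset.filter (fun D => A ⊆ D ∧ Ind D) := by
    simp only [Finset.mem_filter, Finset.mem_powerset]
    exact ⟨Finset.insert_subset hxX hD.1, hD.2.1.trans (Finset.subset_insert _ _), hind⟩
  have := hmax _ h1
  rw [Finset.card_insert_of_notMem hxD] at this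
  omega

lemma card_le_of_maximal {α : Type*} [DecidableEq α] {Ind : Finset α → Prop}
    (h_exch : ∀ ⦃I J : Finset α⦄, Ind I → Ind J → I.card < J.card →
      ∃ e ∈ J \ I, Ind (insert e I))
    {I J X : Finset α} (hI : Ind I) (hJ : Ind J) (hJX : J ⊆ X)
    (hImax : ∀ x ∈ X, x ∉ I → ¬ Ind (insert x I)) : J.card ≤ I.card := by
  by_contra h
  obtain ⟨e, he, hind⟩ := h_exch hI hJ (by omega)
  rw [Finset.mem_sdiff] at he
  exact hImax e (hJX he.1) he.2 hind

/-- If `S` is dependent and is ordered by strictly decreasing weight as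
`s 0, s 1, …`, and `j` is the least index such that the prefix `{s 0, …, s j}` is
dependent, then `s j` is not in the maximum-weight basis. -/
theorem first_dependent_prefix_element_not_in_max_basis {α : Type*} [DecidableEq α]
    [Fintype α]
    (Ind : Finset α → Prop)
    (h_empty : Ind ∅)
    (h_down : ∀ ⦃I J : Finset α⦄, Ind I → J ⊆ I → Ind J)
    (h_exch : ∀ ⦃I J : Finset α⦄, Ind I → Ind J → I.card < J.card →
      ∃ e ∈ J \ I, Ind (insert e I))
    (w : α → ℝ) (hw : Function.Injective w)
    (Bstar : Finset α) (hB : IsBasis Ind Bstar)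
    (hmax : ∀ B : Finset α, IsBasis Ind B → ∑ e ∈ B, w e ≤ ∑ e ∈ Bstar, w e)
    (S : Finset α) (hSdep : ¬ Ind S)
    (s : Fin S.card → α) (hs_mem : ∀ i, s i ∈ S) (hs_inj : Function.Injective s)
    (hs_sorted : ∀ i i' : Fin S.card, i < i' → w (s i') < w (s i))
    (j : Fin S.card)
    (hj_dep : ¬ Ind ((Finset.Iic j).image s))
    (hj_min : ∀ i < j, Ind ((Finset.Iic i).image s)) :
    s j ∉ Bstar := by
  classical
  intro hmem
  set A : Finset α := (Finset.Iio j).image s with hA_def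
  -- A is independent
  have hA_ind : Ind A := by
    rcases Nat.eq_zero_or_pos j.val with h0 | h0
    · have : Finset.Iio j = ∅ := by
        apply Finset.eq_empty_of_forall_notMem
        intro k hk
        rw [Finset.mem_Iio] at hk
        have : k.val < j.val := hk
        omega
      rw [hA_def, this]
      simpa using h_empty
    · have hjlt : j.val - 1 < S.card := by omega
      set i : Fin S.card := ⟨j.val - 1, hjlt⟩ with hi_def
      have hij : i < j := by
        rw [Fin.lt_def]; simp [hi_def]; omega
      have hsub : A ⊆ (Finset.Iic i).image s := by
        apply Finset.image_subset_image
        intro k hk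
        rw [Finset.mem_Iio] at hk
        rw [Finset.mem_Iic]
        rw [Fin.lt_def] at hk
        rw [Fin.le_def]
        simp [hi_def]
        omega
      exact h_down (hj_min i hij) hsub
  -- insert (s j) A is dependent
  have hdep' : ¬ Ind (insert (s j) A) := by
    have : Finset.Iic j = insert j (Finset.Iio j) := (Finset.Iio_insert j).symm
    rw [this, Finset.image_insert] at hj_dep
    exact hj_dep
  set B' : Finset α := Bstar.erase (s j) with hB'_def
  have hB'_ind : Ind B' := h_down hB.1 (Finset.erase_subset _ _)
  have hBstar_eq : Bstar = insert (s j) B' := (Finset.insert_erase hmem).symm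
  have hsjB' : s j ∉ B' := Finset.notMem_erase _ _
  have hcardB' : B'.card + 1 = Bstar.card := by
    rw [hB'_def, Finset.card_erase_of_mem hmem]
    have := Finset.card_pos.mpr ⟨s j, hmem⟩
    omega
  -- key: find f ∈ A \ B' with Ind (insert f B')
  have key : ∃ f ∈ A, f ∉ B' ∧ Ind (insert f B') := by
    by_contra hno
    push_neg at hno
    obtain ⟨D, hAD, hDX, hD_ind, hD_max⟩ :=
      exists_maximal_ext Ind A (A ∪ B') Finset.subset_union_left hA_ind
    have hB'max : ∀ x ∈ A ∪ B', x ∉ B' → ¬ Ind (insert x B') := by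
      intro x hx hxB'
      rcases Finset.mem_union.mp hx with h | h
      · exact hno x h hxB'
      · exact absurd h hxB'
    have h1 : D.card ≤ B'.card :=
      card_le_of_maximal h_exch hB'_ind hD_ind hDX hB'max
    have h2 : B'.card ≤ D.card :=
      card_le_of_maximal h_exch hD_ind hB'_ind Finset.subset_union_right hD_max
    have hDmax' : ∀ x ∈ insert (s j) (A ∪ B'), x ∉ D → ¬ Ind (insert x D) := by
      intro x hx hxD
      rcases Finset.mem_insert.mp hx with h | h
      · subst h
        intro hind
        exact hdep' (h_down hind (Finset.insert_subset_insert _ hAD))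
      · exact hD_max x h hxD
    have hBsub : Bstar ⊆ insert (s j) (A ∪ B') := by
      rw [hBstar_eq]
      exact Finset.insert_subset_insert _ Finset.subset_union_right
    have h3 : Bstar.card ≤ D.card :=
      card_le_of_maximal h_exch hD_ind hB.1 hBsub hDmax'
    omega
  obtain ⟨f, hfA, hfB', hf_ind⟩ := key
  -- f = s i with i < j, so w (s j) < w f
  obtain ⟨i, hi, hfi⟩ := Finset.mem_image.mp hfA
  rw [Finset.mem_Iio] at hi
  have hwf : w (s j) < w f := by rw [← hfi]; exact hs_sorted i j hi
  have hfne : f ≠ s j := fun h => by rw [h] at hwf; exact lt_irrefl _ hwf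
  have hfBstar : f ∉ Bstar := by
    rw [hBstar_eq]
    simp [hfne, hfB']
  set B'' : Finset α := insert f B' with hB''_def
  have hcardB'' : B''.card = Bstar.card := by
    rw [hB''_def, Finset.card_insert_of_notMem hfB']; omega
  have hB''_basis : IsBasis Ind B'' := by
    refine ⟨hf_ind, ?_⟩
    intro x hx hind
    have hcard : Bstar.card < (insert x B'').card := by
      rw [Finset.card_insert_of_notMem hx]; omega
    obtain ⟨e, he, hind'⟩ := h_exch hB.1 hind hcard
    rw [Finset.mem_sdiff] at he
    exact hB.2 e he.2 hind'
  have := hmax B'' hB''_basis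
  rw [hB''_def, Finset.sum_insert hfB'] at this
  rw [hBstar_eq, Finset.sum_insert hsjB'] at this
  linarith
end
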